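/- The Lebesgue integral over [0,1] of the function f defined by applying φ (φ(0)=0, φ(1)=2, φ(2)=1) digit-wise to ternary expansions equals 1/2. -/

import Mathlib

open MeasureTheory

/-- φ(0)=0, φ(1)=2, φ(2)=1. -/
def phi (i : ℕ) : ℕ := if i = 1 then 2 else if i = 2 then 1 else i

/-- The n-th ternary digit of x (0-indexed; terminating representation). -/
noncomputable def tdigit (x : ℝ) (n : ℕ) : ℕ := (⌊x * 3 ^ (n + 1)⌋).toNat % 3

/-- f obtained by applying φ digit-wise to the ternary expansion. -/
noncomputable def f (x : ℝ) : ℝ := ∑' n : ℕ, (phi (tdigit x n) : ℝ) / 3 ^ (n + 1)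

lemma tdigit_meas (n : ℕ) : Measurable fun x : ℝ => tdigit x n :=
  (measurable_of_countable (fun z : ℤ => z.toNat % 3)).comp (measurable_id.mul_const _).floor

lemma phi_le {i : ℕ} (h : i < 3) : phi i ≤ 2 := by unfold phi; split_ifs <;> omega

lemma tdigit_lt (x : ℝ) (n : ℕ) : tdigit x n < 3 := Nat.mod_lt _ (by norm_num)

lemma g_meas (n : ℕ) : Measurable fun x : ℝ => (phi (tdigit x n) : ℝ) :=
  (measurable_of_countable (fun i : ℕ => (phi i : ℝ))).comp (tdigit_meas n)

lemma g_bdd (n : ℕ) (x : ℝ) : ‖(phi (tdigit x n) : ℝ)‖ ≤ 2 := by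
  rw [Real.norm_of_nonneg (by positivity)]
  exact_mod_cast phi_le (tdigit_lt x n)

lemma g_intInt (n : ℕ) (a b : ℝ) :
    IntervalIntegrable (fun x => (phi (tdigit x n) : ℝ)) volume a b :=
  (intervalIntegrable_const (c := (2:ℝ))).mono_fun' (g_meas n).aestronglyMeasurable
    (Filter.Eventually.of_forall (g_bdd n))

lemma step (n k : ℕ) :
    ∫ x in ((k : ℝ)/3^(n+1))..(((k:ℝ)+1)/3^(n+1)), (phi (tdigit x n) : ℝ)
      = (phi (k % 3) : ℝ) / 3^(n+1) := by
  have hN : (0:ℝ) < 3^(n+1) := by positivity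
  have hae : ∀ᵐ x : ℝ, x ≠ ((k:ℝ)+1)/3^(n+1) := by
    rw [ae_iff]
    simp only [not_ne_iff, Set.setOf_eq_eq_singleton]
    exact Real.volume_singleton
  have hcongr : ∫ x in ((k : ℝ)/3^(n+1))..(((k:ℝ)+1)/3^(n+1)), (phi (tdigit x n) : ℝ)
      = ∫ _x in ((k : ℝ)/3^(n+1))..(((k:ℝ)+1)/3^(n+1)), ((phi (k % 3) : ℝ)) := by
    apply intervalIntegral.integral_congr_ae
    filter_upwards [hae] with x hx hmem
    have hle : (k : ℝ)/3^(n+1) ≤ ((k:ℝ)+1)/3^(n+1) := by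
      gcongr
      linarith
    rw [Set.uIoc_of_le hle] at hmem
    have hx1 : (k:ℝ) ≤ x * 3^(n+1) := by
      rw [← div_le_iff₀ hN]; exact le_of_lt hmem.1
    have hx2 : x * 3^(n+1) < (k:ℝ) + 1 := by
      rw [← lt_div_iff₀ hN]; exact lt_of_le_of_ne hmem.2 hx
    have hfloor : ⌊x * 3^(n+1)⌋ = (k : ℤ) := by
      rw [Int.floor_eq_iff]
      constructor <;> push_cast <;> [exact hx1; exact hx2]
    unfold tdigit
    rw [hfloor]
    simp
  rw [hcongr, intervalIntegral.integral_const, smul_eq_mul]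
  field_simp
  ring

lemma sum_phi_mod (m : ℕ) : ∑ k ∈ Finset.range (3*m), (phi (k % 3) : ℝ) = 3 * m := by
  induction m with
  | zero => simp
  | succ m ih =>
    have h3 : 3 * (m+1) = (3*m) + 1 + 1 + 1 := by ring
    rw [h3, Finset.sum_range_succ, Finset.sum_range_succ, Finset.sum_range_succ, ih]
    have e0 : (3*m) % 3 = 0 := by omega
    have e1 : (3*m+1) % 3 = 1 := by omega
    have e2 : (3*m+1+1) % 3 = 2 := by omega
    rw [e0, e1, e2]
    simp [phi]
    ring

lemma key (n : ℕ) : ∫ x in (0:ℝ)..1, (phi (tdigit x n) : ℝ) = 1 := by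
  have hN : (0:ℝ) < 3^(n+1) := by positivity
  have h := intervalIntegral.sum_integral_adjacent_intervals
    (a := fun k : ℕ => (k : ℝ)/3^(n+1)) (n := 3^(n+1)) (μ := volume)
    (f := fun x => (phi (tdigit x n) : ℝ)) (fun k _ => g_intInt n _ _)
  simp only [Nat.cast_zero, zero_div] at h
  have hend : ((3^(n+1) : ℕ) : ℝ)/3^(n+1) = 1 := by
    push_cast; field_simp
  rw [hend] at h
  rw [← h]
  have hsum : ∀ k ∈ Finset.range (3^(n+1)),
      (∫ x in ((k : ℝ)/3^(n+1))..(((k+1:ℕ):ℝ)/3^(n+1)), (phi (tdigit x n) : ℝ))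
        = (phi (k % 3) : ℝ) / 3^(n+1) := by
    intro k _
    have := step n k
    push_cast at this ⊢
    exact this
  rw [Finset.sum_congr rfl hsum, ← Finset.sum_div]
  have h3 : 3^(n+1) = 3 * 3^n := by ring
  rw [h3, sum_phi_mod]
  push_cast
  field_simp
  ring

theorem stmt11 : ∫ x in (0:ℝ)..1, f x = 1 / 2 := by
  have hterm : ∀ n : ℕ, ∫ x in Set.Ioc (0:ℝ) 1, (phi (tdigit x n) : ℝ)/3^(n+1)
      = 1/3^(n+1) := by
    intro n
    rw [integral_div, ← intervalIntegral.integral_of_le zero_le_one, key n]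
  have hInt : ∀ n : ℕ, Integrable (fun x => (phi (tdigit x n) : ℝ)/3^(n+1))
      (volume.restrict (Set.Ioc (0:ℝ) 1)) := by
    intro n
    have := (g_intInt n 0 1).1
    exact this.div_const _
  have hnorm : ∀ n : ℕ, (∫ x in Set.Ioc (0:ℝ) 1, ‖(phi (tdigit x n) : ℝ)/3^(n+1)‖)
      = 1/3^(n+1) := by
    intro n
    rw [← hterm n]
    congr 1
    funext x
    exact Real.norm_of_nonneg (by positivity)
  have hsum : Summable fun n : ℕ =>
      ∫ x in Set.Ioc (0:ℝ) 1, ‖(phi (tdigit x n) : ℝ)/3^(n+1)‖ := by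
    simp_rw [hnorm]
    have : ∀ n : ℕ, (1:ℝ)/3^(n+1) = (1/3)*(1/3:ℝ)^n := fun n => by
      rw [pow_succ, one_div_pow]; ring
    simp_rw [this]
    exact (summable_geometric_of_lt_one (by norm_num) (by norm_num)).mul_left _
  rw [intervalIntegral.integral_of_le zero_le_one]
  unfold f
  rw [← MeasureTheory.integral_tsum_of_summable_integral_norm hInt hsum]
  rw [tsum_congr hterm]
  calc ∑' n : ℕ, (1:ℝ)/3^(n+1) = ∑' n : ℕ, (1/3)*(1/3:ℝ)^n := by
        apply tsum_congr; intro n; rw [pow_succ, one_div_pow]; ring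
    _ = (1/3) * (1-1/3:ℝ)⁻¹ := by
        rw [tsum_mul_left, tsum_geometric_of_lt_one (by norm_num) (by norm_num)]
    _ = 1/2 := by norm_num
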